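/- arXiv:1904.06013 — 2 statements merged into one kernel-verified Lean document; each statement's English description precedes it below -/
import Mathlib

section
/- Let C = {(x₁, x₂) ∈ ℝ² : x₁ ≥ 0, x₂ ≥ 0}, f₁(x, y) = x₂y₁ − x₁y₂, f₂(x, y) = x₁y₂ − x₂y₁, α₁ = α₂ = 1/2, and x¹ = (1, 1). Let {δ_k}, {θ_k}, {ρ_k} ⊂ (0, 1) be arbitrary, and let sequences {x^k}, {y^k}, {z^k} in ℝ² satisfy: x^1 = x¹; z^k ∈ C with (1/2) f₁(z^k, y) + (1/2) f₂(z^k, y) + (1/ρ_k)⟨y − z^k, z^k − x^k⟩ ≥ 0 for all y ∈ C; y^k = θ_k P_C(x^k) + (1 − θ_k) z^k; and x^{k+1} = δ_k x¹ + (1 − δ_k) y^k (the scheme of Statement 2.2 with the contraction F ≡ x¹, A the identity operator, and γ = 1). Then x^k = z^k = y^k = (1, 1) for every k ≥ 1, so {x^k} converges to (1, 1), which does not belong to Ω = Sol(C, f₁) ∩ Sol(C, f₂) = {(0, 0)}. -/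
/-!
The combination `(1/2) f₁ + (1/2) f₂` vanishes identically, so the proximal inequality for `z^k`
tested at `y = x^k ∈ C` reads `⟪x^k - z^k, z^k - x^k⟫ ≥ 0`, forcing `z^k = x^k`. The projection
fixes points of `C`, so when `x^k = (1,1)` both `y^k` and `x^{k+1}` are convex combinations of
`(1,1)` with itself. Hence the scheme never leaves `(1,1)`, which is not in `Ω = {(0,0)}`.
-/

open Filter Topology RealInnerProductSpace

/-- The plane `ℝ²` as a Euclidean space. -/
abbrev E2 : Type := EuclideanSpace ℝ (Fin 2)

/-- The nonnegative quadrant `C = {(x₁,x₂) ∈ ℝ² : x₁ ≥ 0, x₂ ≥ 0}`. -/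
def Quad : Set E2 := {p | 0 ≤ p 0 ∧ 0 ≤ p 1}

/-- `f₁(x,y) = x₂y₁ − x₁y₂`. -/
def f1 (x y : E2) : ℝ := x 1 * y 0 - x 0 * y 1

/-- `f₂(x,y) = x₁y₂ − x₂y₁`. -/
def f2 (x y : E2) : ℝ := x 0 * y 1 - x 1 * y 0

/-- The point `x¹ = (1,1) ∈ ℝ²`. -/
def onePt : E2 := !₂[1, 1]

/-- The origin `(0,0) ∈ ℝ²`. -/
def zeroPt : E2 := !₂[0, 0]

/-- Solution set of the equilibrium problem `EP(C, f)`. -/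
def Sol (C : Set E2) (f : E2 → E2 → ℝ) : Set E2 :=
  {x ∈ C | ∀ y ∈ C, 0 ≤ f x y}

section InnerProductSpace

variable {F : Type*} [NormedAddCommGroup F] [InnerProductSpace ℝ F]

theorem eq_of_inner_sub_sub_nonneg {x z : F} (h : 0 ≤ ⟪x - z, z - x⟫) : z = x := by
  rw [← neg_sub x z, inner_neg_right, neg_nonneg, real_inner_self_nonpos, sub_eq_zero] at h
  exact h.symm

theorem eq_of_forall_proximal_ineq {C : Set F} {f : F → F → ℝ} {ρ : ℝ} {x z : F}
    (hρ : 0 < ρ) (hx : x ∈ C) (hfx : f z x ≤ 0)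
    (hz : ∀ w ∈ C, 0 ≤ f z w + (1 / ρ) * ⟪w - z, z - x⟫) : z = x := by
  have h := hz x hx
  have hinner : 0 ≤ (1 / ρ) * ⟪x - z, z - x⟫ := by linarith
  exact eq_of_inner_sub_sub_nonneg (nonneg_of_mul_nonneg_right hinner (by positivity))

theorem eq_self_of_forall_projection_ineq {C : Set F} {P : F → F} {p : F}
    (hP : ∀ w ∈ C, ⟪w - P p, p - P p⟫ ≤ 0) (hp : p ∈ C) : P p = p := by
  have h := hP p hp
  rwa [real_inner_self_nonpos, sub_eq_zero, eq_comm] at h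

end InnerProductSpace

theorem half_f1_add_half_f2 (x w : E2) : (1 / 2) * f1 x w + (1 / 2) * f2 x w = 0 := by
  simp only [f1, f2]
  ring

theorem onePt_mem_quad : onePt ∈ Quad := by
  simp [onePt, Quad]

theorem zeroPt_mem_quad : zeroPt ∈ Quad := by
  simp [zeroPt, Quad]

theorem onePt_ne_zeroPt : onePt ≠ zeroPt := by
  intro h
  simpa [onePt, zeroPt] using congrArg (fun v : E2 => v 0) h

theorem eq_zeroPt_of_mem_quad {p : E2} (hp : p ∈ Quad) (h0 : p 0 ≤ 0) (h1 : p 1 ≤ 0) :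
    p = zeroPt := by
  ext i
  fin_cases i
  · simpa [zeroPt] using le_antisymm h0 hp.1
  · simpa [zeroPt] using le_antisymm h1 hp.2

-- Testing `f₁` against `(0,1)` forces `x₁ ≤ 0`, and `f₂` against `(1,0)` forces `x₂ ≤ 0`.
theorem sol_f1_inter_sol_f2 : Sol Quad f1 ∩ Sol Quad f2 = {zeroPt} := by
  ext p
  constructor
  · rintro ⟨⟨hp, h1⟩, -, h2⟩
    have e1 := h1 !₂[0, 1] (by simp [Quad])
    have e2 := h2 !₂[1, 0] (by simp [Quad])
    simp only [f1, f2] at e1 e2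
    exact eq_zeroPt_of_mem_quad hp (by simpa using e1) (by simpa using e2)
  · rintro rfl
    exact ⟨⟨zeroPt_mem_quad, fun w _ => by simp [f1, zeroPt]⟩,
      ⟨zeroPt_mem_quad, fun w _ => by simp [f2, zeroPt]⟩⟩

theorem statement_2_2_counterexample_general
    (PC : E2 → E2)
    (hPC : ∀ p : E2, PC p ∈ Quad ∧ ∀ w ∈ Quad, ⟪w - PC p, p - PC p⟫ ≤ 0)
    (δ θ ρ : ℕ → ℝ)
    (hρ : ∀ k, ρ k ∈ Set.Ioo (0 : ℝ) 1)
    (x y z : ℕ → E2)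
    (hx1 : x 1 = onePt)
    (hz : ∀ k ≥ 1, z k ∈ Quad ∧ ∀ w ∈ Quad,
      0 ≤ (1 / 2) * f1 (z k) w + (1 / 2) * f2 (z k) w +
        (1 / ρ k) * ⟪w - z k, z k - x k⟫)
    (hy : ∀ k ≥ 1, y k = θ k • PC (x k) + (1 - θ k) • z k)
    (hxk : ∀ k ≥ 1, x (k + 1) = (δ k • onePt + (1 - δ k) • y k : E2)) :
    (∀ k ≥ 1, x k = onePt ∧ z k = onePt ∧ y k = onePt) ∧
    Filter.Tendsto x Filter.atTop (𝓝 onePt) ∧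
    Sol Quad f1 ∩ Sol Quad f2 = {zeroPt} ∧
    onePt ∉ Sol Quad f1 ∩ Sol Quad f2 := by
  have hPC1 : PC onePt = onePt :=
    eq_self_of_forall_projection_ineq (hPC onePt).2 onePt_mem_quad
  have hstep : ∀ k ≥ 1, x k = onePt → z k = onePt ∧ y k = onePt := by
    intro k hk hxk_one
    have hzk : z k = onePt := by
      refine eq_of_forall_proximal_ineq (hρ k).1 onePt_mem_quad
        (f := fun z w => (1 / 2) * f1 z w + (1 / 2) * f2 z w)
        (half_f1_add_half_f2 _ _).le ?_
      simpa only [hxk_one] using (hz k hk).2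
    refine ⟨hzk, ?_⟩
    rw [hy k hk, hxk_one, hPC1, hzk, Convex.combo_self (add_sub_cancel _ _)]
  have hxall : ∀ k ≥ 1, x k = onePt := by
    intro k hk
    induction k, hk using Nat.le_induction with
    | base => exact hx1
    | succ k hk ih =>
      rw [hxk k hk, (hstep k hk ih).2, Convex.combo_self (add_sub_cancel _ _)]
  refine ⟨fun k hk => ⟨hxall k hk, hstep k hk (hxall k hk)⟩, ?_, sol_f1_inter_sol_f2, ?_⟩
  · refine tendsto_const_nhds.congr' ?_
    filter_upwards [eventually_ge_atTop 1] with k hk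
    exact (hxall k hk).symm
  · rw [sol_f1_inter_sol_f2]
    exact onePt_ne_zeroPt

/-- the scheme of Statement 2.2 with `F ≡ x¹ = (1,1)`, `A = I`,
`γ = 1` applied to the combination `(1/2)f₁ + (1/2)f₂` stays at `(1,1)`
forever, hence converges to `(1,1) ∉ Ω = Sol(C,f₁) ∩ Sol(C,f₂) = {(0,0)}`.
Here `PC` is the metric projection onto `C`, characterized by its variational
inequality. -/
theorem statement_2_2_counterexample
    (PC : E2 → E2)
    (hPC : ∀ p : E2, PC p ∈ Quad ∧ ∀ w ∈ Quad, ⟪w - PC p, p - PC p⟫ ≤ 0)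
    (δ θ ρ : ℕ → ℝ)
    (hδ : ∀ k, δ k ∈ Set.Ioo (0 : ℝ) 1)
    (hθ : ∀ k, θ k ∈ Set.Ioo (0 : ℝ) 1)
    (hρ : ∀ k, ρ k ∈ Set.Ioo (0 : ℝ) 1)
    (x y z : ℕ → E2)
    (hx1 : x 1 = onePt)
    (hz : ∀ k ≥ 1, z k ∈ Quad ∧ ∀ w ∈ Quad,
      0 ≤ (1 / 2) * f1 (z k) w + (1 / 2) * f2 (z k) w +
        (1 / ρ k) * ⟪w - z k, z k - x k⟫)
    (hy : ∀ k ≥ 1, y k = θ k • PC (x k) + (1 - θ k) • z k)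
    (hxk : ∀ k ≥ 1, x (k + 1) = (δ k • onePt + (1 - δ k) • y k : E2)) :
    (∀ k ≥ 1, x k = onePt ∧ z k = onePt ∧ y k = onePt) ∧
    Filter.Tendsto x Filter.atTop (𝓝 onePt) ∧
    Sol Quad f1 ∩ Sol Quad f2 = {zeroPt} ∧
    onePt ∉ Sol Quad f1 ∩ Sol Quad f2 :=
  statement_2_2_counterexample_general PC hPC δ θ ρ hρ x y z hx1 hz hy hxk
end

section
/- Let C = {(x₁, x₂) ∈ ℝ² : x₁ ≥ 0, x₂ ≥ 0}, f₁(x, y) = x₂y₁ − x₁y₂, f₂(x, y) = x₁y₂ − x₂y₁, α₁ = α₂ = 1/2. Let {θ_k} ⊂ [0, 1], {λ_k}, {μ_k} ⊂ (0, 1) with λ_k + μ_k = 1, and {ρ_k} ⊂ (0, 1). Let sequences {x^k}, {y^k}, {z^k} satisfy: x^0 = x^1 = (1, 1); y^k = x^k + θ_k (x^k − x^{k−1}); z^k ∈ C with (1/2) f₁(z^k, y) + (1/2) f₂(z^k, y) + (1/ρ_k)⟨y − z^k, z^k − y^k⟩ ≥ 0 for all y ∈ C; and x^{k+1} = λ_k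 x^k + μ_k z^k (the inertial scheme of Statement 2.5). Then x^k = y^k = z^k = (1, 1) for every k ≥ 1, so {x^k} converges to (1, 1), which does not belong to Ω = Sol(C, f₁) ∩ Sol(C, f₂) = {(0, 0)}. -/
open Filter Topology RealInnerProductSpace

/-!
The bifunction `(1/2) f₁ + (1/2) f₂` vanishes identically, so the regularized subproblem
defining `zᵏ` only says `⟪w - zᵏ, zᵏ - yᵏ⟫ ≥ 0` on `C`, i.e. `zᵏ` is the projection of `yᵏ`
onto `C`. Starting from `x⁰ = x¹ = (1,1) ∈ C`, every extrapolation `yᵏ` stays at `(1,1)`,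
hence so do `zᵏ` and `xᵏ⁺¹`. On the other hand `Sol(C, f₁)` is the half-axis `{0} × [0,∞)`
and `Sol(C, f₂)` the half-axis `[0,∞) × {0}`, which meet only at the origin.
-/

lemma f1_add_f2 (x y : E2) : f1 x y + f2 x y = 0 := by
  unfold f1 f2; ring

lemma eq_of_inner_sub_nonneg {F : Type*} [NormedAddCommGroup F] [InnerProductSpace ℝ F]
    {z p : F} {c : ℝ} (hc : 0 < c) (h : 0 ≤ c * ⟪p - z, z - p⟫) : z = p := by
  have hnonpos : ⟪p - z, p - z⟫ ≤ 0 := by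
    rw [← neg_sub p z, inner_neg_right] at h
    nlinarith
  exact (sub_eq_zero.mp (real_inner_self_nonpos.mp hnonpos)).symm

lemma eq_of_forall_regularized_nonneg {r : ℝ} (hr : 0 < r) {z p : E2} (hp : p ∈ Quad)
    (h : ∀ w ∈ Quad, 0 ≤ (1 / 2) * f1 z w + (1 / 2) * f2 z w + (1 / r) * ⟪w - z, z - p⟫) :
    z = p := by
  have hp' := h p hp
  rw [← mul_add, f1_add_f2, mul_zero, zero_add] at hp'
  exact eq_of_inner_sub_nonneg (one_div_pos.mpr hr) hp'

lemma Sol_Quad_f1 : Sol Quad f1 = {p | p 0 = 0 ∧ 0 ≤ p 1} := by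
  ext p
  refine ⟨fun ⟨⟨hp0, hp1⟩, hf⟩ => ⟨?_, hp1⟩, fun ⟨hp0, hp1⟩ => ⟨⟨hp0.ge, hp1⟩, ?_⟩⟩
  · have := hf !₂[0, 1] (by simp [Quad])
    simp only [f1] at this
    norm_num at this
    linarith
  · intro w ⟨hw0, _⟩
    simp only [f1, hp0, zero_mul, sub_zero]
    positivity

lemma Sol_Quad_f2 : Sol Quad f2 = {p | 0 ≤ p 0 ∧ p 1 = 0} := by
  ext p
  refine ⟨fun ⟨⟨hp0, hp1⟩, hf⟩ => ⟨hp0, ?_⟩, fun ⟨hp0, hp1⟩ => ⟨⟨hp0, hp1.ge⟩, ?_⟩⟩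
  · have := hf !₂[1, 0] (by simp [Quad])
    simp only [f2] at this
    norm_num at this
    linarith
  · intro w ⟨_, hw1⟩
    simp only [f2, hp1, zero_mul, sub_zero]
    positivity

lemma Sol_Quad_f1_inter_Sol_Quad_f2 : Sol Quad f1 ∩ Sol Quad f2 = {(!₂[0, 0] : E2)} := by
  ext p
  simp only [Sol_Quad_f1, Sol_Quad_f2, Set.mem_inter_iff, Set.mem_ofPred_eq,
    Set.mem_singleton_iff]
  constructor
  · rintro ⟨⟨hp0, -⟩, -, hp1⟩
    ext i
    fin_cases i <;> simp [hp0, hp1]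
  · rintro rfl
    simp

theorem statement_2_5_counterexample_general
    (theta lam mu ρ : ℕ → ℝ)
    (hsum : ∀ k, lam k + mu k = 1)
    (hρ : ∀ k, ρ k ∈ Set.Ioo (0 : ℝ) 1)
    (x y z : ℕ → E2)
    (hx0 : x 0 = !₂[1, 1]) (hx1 : x 1 = !₂[1, 1])
    (hy : ∀ k ≥ 1, y k = x k + theta k • (x k - x (k - 1)))
    (hz : ∀ k ≥ 1, z k ∈ Quad ∧ ∀ w ∈ Quad,
      0 ≤ (1 / 2) * f1 (z k) w + (1 / 2) * f2 (z k) w +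
        (1 / ρ k) * ⟪w - z k, z k - y k⟫)
    (hxk : ∀ k ≥ 1, x (k + 1) = lam k • x k + mu k • z k) :
    (∀ k ≥ 1, x k = (!₂[1, 1] : E2) ∧ y k = (!₂[1, 1] : E2) ∧ z k = (!₂[1, 1] : E2)) ∧
    Filter.Tendsto x Filter.atTop (𝓝 (!₂[1, 1] : E2)) ∧
    Sol Quad f1 ∩ Sol Quad f2 = {(!₂[0, 0] : E2)} ∧
    (!₂[1, 1] : E2) ∉ Sol Quad f1 ∩ Sol Quad f2 := by
  set v : E2 := !₂[1, 1]
  have hv : v ∈ Quad := by simp [v, Quad]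
  have hyz : ∀ k ≥ 1, x k = v → x (k - 1) = v → y k = v ∧ z k = v := by
    intro k hk hxk' hxk''
    have hyk : y k = v := by rw [hy k hk, hxk', hxk'', sub_self, smul_zero, add_zero]
    refine ⟨hyk, eq_of_forall_regularized_nonneg (hρ k).1 hv ?_⟩
    simpa only [hyk] using (hz k hk).2
  have hx : ∀ k, x k = v ∧ x (k + 1) = v := by
    intro k
    induction k with
    | zero => exact ⟨hx0, hx1⟩
    | succ k ih =>
      refine ⟨ih.2, ?_⟩
      have hzk := (hyz (k + 1) k.succ_pos ih.2 ih.1).2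
      rw [hxk (k + 1) k.succ_pos, ih.2, hzk, ← add_smul, hsum, one_smul]
  have hxv : x = fun _ => v := funext fun k => (hx k).1
  refine ⟨fun k hk => ⟨(hx k).1, hyz k hk (hx k).1 ?_⟩, hxv ▸ tendsto_const_nhds,
    Sol_Quad_f1_inter_Sol_Quad_f2, ?_⟩
  · obtain ⟨j, rfl⟩ := Nat.exists_eq_add_of_le' hk
    exact (hx j).1
  · rw [Sol_Quad_f1_inter_Sol_Quad_f2, Set.mem_singleton_iff]
    intro h
    simpa [v] using congrArg (fun q : E2 => q 0) h

/-- the inertial scheme of Statement 2.5 started at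
`x⁰ = x¹ = (1,1)` applied to the combination `(1/2)f₁ + (1/2)f₂` stays at
`(1,1)` forever, hence converges to
`(1,1) ∉ Ω = Sol(C,f₁) ∩ Sol(C,f₂) = {(0,0)}`. -/
theorem statement_2_5_counterexample
    (theta lam mu ρ : ℕ → ℝ)
    (htheta : ∀ k, theta k ∈ Set.Icc (0 : ℝ) 1)
    (hlam : ∀ k, lam k ∈ Set.Ioo (0 : ℝ) 1)
    (hmu : ∀ k, mu k ∈ Set.Ioo (0 : ℝ) 1)
    (hsum : ∀ k, lam k + mu k = 1)
    (hρ : ∀ k, ρ k ∈ Set.Ioo (0 : ℝ) 1)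
    (x y z : ℕ → E2)
    (hx0 : x 0 = !₂[1, 1]) (hx1 : x 1 = !₂[1, 1])
    (hy : ∀ k ≥ 1, y k = x k + theta k • (x k - x (k - 1)))
    (hz : ∀ k ≥ 1, z k ∈ Quad ∧ ∀ w ∈ Quad,
      0 ≤ (1 / 2) * f1 (z k) w + (1 / 2) * f2 (z k) w +
        (1 / ρ k) * ⟪w - z k, z k - y k⟫)
    (hxk : ∀ k ≥ 1, x (k + 1) = lam k • x k + mu k • z k) :
    (∀ k ≥ 1, x k = (!₂[1, 1] : E2) ∧ y k = (!₂[1, 1] : E2) ∧ z k = (!₂[1, 1] : E2)) ∧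
    Filter.Tendsto x Filter.atTop (𝓝 (!₂[1, 1] : E2)) ∧
    Sol Quad f1 ∩ Sol Quad f2 = {(!₂[0, 0] : E2)} ∧
    (!₂[1, 1] : E2) ∉ Sol Quad f1 ∩ Sol Quad f2 :=
  statement_2_5_counterexample_general theta lam mu ρ hsum hρ x y z hx0 hx1 hy hz hxk
end
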